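/- Let Γ = ⟨S_i, u_i⟩_{i=1}^n be a supermodular game whose best response correspondence B takes values in nonempty subcomplete sublattices of S = ∏_{i=1}^n S_i, let (α_i, S_i, A_i, γ_i), i = 1,…,n, be Galois connections, and for each i let ρ_{−i} : ∏_{j≠i} S_j → ∏_{j≠i} S_j be the closure operator ρ_{−i}(s_{−i}) = (γ_j(α_j(s_j)))_{j≠i}. Define the game with abstract best response Γ_G = ⟨S_i, u_{i,G}⟩_{i=1}^n by u_{i,G}(s_i, s_{−i}) = u_i(s_i, ρ_{−i}(s_{−i})), and assume its best response correspondence B_G also takes values in nonempty subcomplete sublattices of S. Then Eq(Γ) ⪯_EM Eq(Γ_G); in particular, the least equilibrium of Γ is ≤ the least equilibrium of Γ_G and the greatest equilibrium of Γ is ≤ the greatest equilibrium of Γ_G. -/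

import Mathlib

/-!
The abstract game sees the opponents' strategies through the closure `ρ = γ ∘ α`, so its best
response is `B_G = B ∘ ρ`. Supermodularity makes `B` monotone for both the Hoare and the Smyth
preorder: for `s ≤ s'`, `x ∈ B(s)` and `y ∈ B(s')`, increasing differences and supermodularity
put `x ⊔ y` in `B(s')` and `x ⊓ y` in `B(s)`. Moreover `B` contains the infima and suprema of its
values. For an equilibrium `s` of `Γ`, extensivity of `ρ` gives `s ≤ sup B(ρ s)`, and the greatest
fixed point of the monotone map `t ↦ sup B(ρ t)` is an equilibrium of `Γ_G` above `s`. Dually,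
for an equilibrium `t` of `Γ_G` we get `inf B(t) ≤ t`, and the least fixed point of
`t ↦ inf B(t)` is an equilibrium of `Γ` below `t`.
-/

/-- Smyth preorder on subsets. -/
def SmythLE {β : Type*} [LE β] (X Y : Set β) : Prop := ∀ y ∈ Y, ∃ x ∈ X, x ≤ y

/-- Hoare preorder on subsets. -/
def HoareLE {β : Type*} [LE β] (X Y : Set β) : Prop := ∀ x ∈ X, ∃ y ∈ Y, x ≤ y

/-- Egli-Milner preorder on subsets. -/
def EgliMilnerLE {β : Type*} [LE β] (X Y : Set β) : Prop := SmythLE X Y ∧ HoareLE X Y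

/-- The best response correspondence of the game with strategy spaces `S j` and
utility functions `u i : (∀ j, S j) → ℝ^{N i}`. -/
def bestResponse {n : ℕ} {S : Fin n → Type*} [∀ j, CompleteLattice (S j)]
    {N : Fin n → ℕ} (u : ∀ i, (∀ j, S j) → (Fin (N i) → ℝ))
    (s : ∀ j, S j) : Set (∀ j, S j) :=
  {t | ∀ i, ∀ x : S i, u i (Function.update s i x) ≤ u i (Function.update s i (t i))}

/-- The pure strategy Nash equilibria: the fixed points of the best response. -/
def nashEq {n : ℕ} {S : Fin n → Type*} [∀ j, CompleteLattice (S j)]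
    {N : Fin n → ℕ} (u : ∀ i, (∀ j, S j) → (Fin (N i) → ℝ)) : Set (∀ j, S j) :=
  {s | s ∈ bestResponse u s}

/-- The utility functions of the game with abstract best response `Γ_G`:
`u_{i,G}(sᵢ, s₋ᵢ) = uᵢ(sᵢ, ρ₋ᵢ(s₋ᵢ))` where `ρ₋ᵢ(s₋ᵢ) = (γⱼ (αⱼ (s j)))_{j ≠ i}`. -/
def abstractResponseUtility {n : ℕ} {S A : Fin n → Type*}
    [∀ j, CompleteLattice (S j)] [∀ j, CompleteLattice (A j)]
    (α : ∀ j, S j → A j) (γ : ∀ j, A j → S j)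
    {N : Fin n → ℕ} (u : ∀ i, (∀ j, S j) → (Fin (N i) → ℝ))
    (i : Fin n) (s : ∀ j, S j) : Fin (N i) → ℝ :=
  u i (Function.update (fun j => γ j (α j (s j))) i (s i))

open Function

section PowersetPreorders

variable {β : Type*} {X Y : Set β}

theorem HoareLE.sSup_le_sSup [CompleteSemilatticeSup β] (h : HoareLE X Y) : sSup X ≤ sSup Y :=
  sSup_le fun x hx => let ⟨_, hy, hxy⟩ := h x hx; hxy.trans (le_sSup hy)

theorem SmythLE.sInf_le_sInf [CompleteSemilatticeInf β] (h : SmythLE X Y) : sInf X ≤ sInf Y :=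
  le_sInf fun y hy => let ⟨_, hx, hxy⟩ := h y hy; (sInf_le hx).trans hxy

theorem SmythLE.le_of_isLeast [Preorder β] {L L' : β} (h : SmythLE X Y) (hL : IsLeast X L)
    (hL' : IsLeast Y L') : L ≤ L' :=
  let ⟨_, hx, hxL'⟩ := h L' hL'.1; (hL.2 hx).trans hxL'

theorem HoareLE.le_of_isGreatest [Preorder β] {G G' : β} (h : HoareLE X Y)
    (hG : IsGreatest X G) (hG' : IsGreatest Y G') : G ≤ G' :=
  let ⟨_, hy, hGy⟩ := h G hG.1; hGy.trans (hG'.2 hy)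

end PowersetPreorders

section FixedPoints

variable {β : Type*} [CompleteLattice β] {F : β → Set β}

theorem exists_mem_self_ge_of_hoareLE (hF : ∀ ⦃a b⦄, a ≤ b → HoareLE (F a) (F b))
    (hsup : ∀ a, sSup (F a) ∈ F a) {s y : β} (hy : y ∈ F s) (hsy : s ≤ y) :
    ∃ t, t ∈ F t ∧ s ≤ t := by
  let φ : β →o β := ⟨fun a => sSup (F a), fun _ _ hab => (hF hab).sSup_le_sSup⟩
  refine ⟨φ.gfp, ?_, φ.le_gfp (hsy.trans (le_sSup hy))⟩
  have h := hsup φ.gfp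
  rwa [show sSup (F φ.gfp) = φ.gfp from φ.map_gfp] at h

theorem exists_mem_self_le_of_smythLE (hF : ∀ ⦃a b⦄, a ≤ b → SmythLE (F a) (F b))
    (hinf : ∀ a, sInf (F a) ∈ F a) {t z : β} (hz : z ∈ F t) (hzt : z ≤ t) :
    ∃ m, m ∈ F m ∧ m ≤ t := by
  let χ : β →o β := ⟨fun a => sInf (F a), fun _ _ hab => (hF hab).sInf_le_sInf⟩
  refine ⟨χ.lfp, ?_, χ.lfp_le ((sInf_le hz).trans hzt)⟩
  have h := hinf χ.lfp
  rwa [show sInf (F χ.lfp) = χ.lfp from χ.map_lfp] at h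

end FixedPoints

section SupermodularGame

variable {n : ℕ} {S : Fin n → Type*} [∀ j, CompleteLattice (S j)] {N : Fin n → ℕ}

def HasSupermodularUtility (u : ∀ i, (∀ j, S j) → (Fin (N i) → ℝ)) : Prop :=
  ∀ i, ∀ s : ∀ j, S j, ∀ x y : S i,
    u i (update s i x) + u i (update s i y) ≤ u i (update s i (x ⊔ y)) + u i (update s i (x ⊓ y))

def HasIncreasingDifferences (u : ∀ i, (∀ j, S j) → (Fin (N i) → ℝ)) : Prop :=
  ∀ i, ∀ x x' : S i, x ≤ x' → ∀ s t : ∀ j, S j, s ≤ t →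
    u i (update s i x') - u i (update s i x) ≤ u i (update t i x') - u i (update t i x)

variable {u : ∀ i, (∀ j, S j) → (Fin (N i) → ℝ)}

theorem bestResponse_hoareLE_of_le (hsm : HasSupermodularUtility u)
    (hid : HasIncreasingDifferences u) {s s' : ∀ j, S j} (hss' : s ≤ s')
    (hne : (bestResponse u s').Nonempty) : HoareLE (bestResponse u s) (bestResponse u s') := by
  obtain ⟨b, hb⟩ := hne
  refine fun x hx => ⟨x ⊔ b, fun i z => ?_, le_sup_left⟩
  have h_inf : u i (update s' i (x i ⊓ b i)) ≤ u i (update s' i (x i)) :=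
    sub_nonneg.mp ((sub_nonneg.mpr (hx i _)).trans (hid i _ _ inf_le_left s s' hss'))
  have h_sup : u i (update s' i (b i)) ≤ u i (update s' i (x i ⊔ b i)) :=
    le_of_add_le_add_left <| calc
      u i (update s' i (x i)) + u i (update s' i (b i))
        ≤ u i (update s' i (x i ⊔ b i)) + u i (update s' i (x i ⊓ b i)) := hsm i s' _ _
      _ ≤ u i (update s' i (x i ⊔ b i)) + u i (update s' i (x i)) := by gcongr
      _ = u i (update s' i (x i)) + u i (update s' i (x i ⊔ b i)) := add_comm _ _
  exact (hb i z).trans h_sup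

theorem bestResponse_smythLE_of_le (hsm : HasSupermodularUtility u)
    (hid : HasIncreasingDifferences u) {s s' : ∀ j, S j} (hss' : s ≤ s')
    (hne : (bestResponse u s).Nonempty) : SmythLE (bestResponse u s) (bestResponse u s') := by
  obtain ⟨b, hb⟩ := hne
  refine fun y hy => ⟨b ⊓ y, fun i z => ?_, inf_le_right⟩
  have h_sup : u i (update s i (b i ⊔ y i)) ≤ u i (update s i (y i)) :=
    sub_nonpos.mp ((hid i _ _ le_sup_right s s' hss').trans (sub_nonpos.mpr (hy i _)))
  have h_inf : u i (update s i (b i)) ≤ u i (update s i (b i ⊓ y i)) :=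
    le_of_add_le_add_right <| calc
      u i (update s i (b i)) + u i (update s i (y i))
        ≤ u i (update s i (b i ⊔ y i)) + u i (update s i (b i ⊓ y i)) := hsm i s _ _
      _ ≤ u i (update s i (y i)) + u i (update s i (b i ⊓ y i)) := by gcongr
      _ = u i (update s i (b i ⊓ y i)) + u i (update s i (y i)) := add_comm _ _
  exact (hb i z).trans h_inf

end SupermodularGame

section AbstractGame

variable {n : ℕ} {S A : Fin n → Type*} [∀ j, CompleteLattice (S j)] [∀ j, CompleteLattice (A j)]
  (α : ∀ j, S j → A j) (γ : ∀ j, A j → S j) {N : Fin n → ℕ}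
  (u : ∀ i, (∀ j, S j) → (Fin (N i) → ℝ))

theorem abstractResponseUtility_update (s : ∀ j, S j) (i : Fin n) (x : S i) :
    abstractResponseUtility α γ u i (update s i x) =
      u i (update (fun j => γ j (α j (s j))) i x) := by
  simp only [abstractResponseUtility, update_self, apply_update (fun j => α j),
    apply_update (fun j => γ j), update_idem]

theorem bestResponse_abstractResponseUtility (s : ∀ j, S j) :
    bestResponse (abstractResponseUtility α γ u) s =
      bestResponse u (fun j => γ j (α j (s j))) := by
  simp only [bestResponse, abstractResponseUtility_update]

theorem mem_nashEq_abstractResponseUtility {t : ∀ j, S j} :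
    t ∈ nashEq (abstractResponseUtility α γ u) ↔ t ∈ bestResponse u (fun j => γ j (α j (t j))) := by
  show t ∈ bestResponse _ t ↔ _
  rw [bestResponse_abstractResponseUtility]

end AbstractGame

theorem abstract_best_response_game_correctness_general {n : ℕ} {S A : Fin n → Type*}
    [∀ j, CompleteLattice (S j)] [∀ j, CompleteLattice (A j)]
    (α : ∀ j, S j → A j) (γ : ∀ j, A j → S j)
    (hgc : ∀ j, GaloisConnection (α j) (γ j))
    {N : Fin n → ℕ} (u : ∀ i, (∀ j, S j) → (Fin (N i) → ℝ))
    -- Γ is supermodular: each uᵢ(·, s₋ᵢ) is supermodular …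
    (hsm : ∀ i, ∀ s : ∀ j, S j, ∀ x y : S i,
      u i (Function.update s i x) + u i (Function.update s i y) ≤
        u i (Function.update s i (x ⊔ y)) + u i (Function.update s i (x ⊓ y)))
    -- … and each uᵢ has increasing differences in (sᵢ, s₋ᵢ)
    (hid : ∀ i, ∀ x x' : S i, x ≤ x' → ∀ s t : ∀ j, S j, s ≤ t →
      u i (Function.update s i x') - u i (Function.update s i x) ≤
        u i (Function.update t i x') - u i (Function.update t i x))
    -- B(s) is a nonempty subcomplete sublattice of S
    (hB : ∀ s : ∀ j, S j, (bestResponse u s).Nonempty ∧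
      ∀ Z ⊆ bestResponse u s, Z.Nonempty →
        sInf Z ∈ bestResponse u s ∧ sSup Z ∈ bestResponse u s) :
    EgliMilnerLE (nashEq u) (nashEq (abstractResponseUtility α γ u)) ∧
    (∀ L L', IsLeast (nashEq u) L →
      IsLeast (nashEq (abstractResponseUtility α γ u)) L' → L ≤ L') ∧
    (∀ G G', IsGreatest (nashEq u) G →
      IsGreatest (nashEq (abstractResponseUtility α γ u)) G' → G ≤ G') := by
  let ρ := (GaloisConnection.dfun α γ hgc).closureOperator
  have hB_extremal (s) := (hB s).2 _ subset_rfl (hB s).1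
  have hEM : EgliMilnerLE (nashEq u) (nashEq (abstractResponseUtility α γ u)) := by
    constructor
    · intro t ht
      obtain ⟨z, hz, hzt⟩ := bestResponse_smythLE_of_le hsm hid (ρ.le_closure t) (hB t).1 t
        ((mem_nashEq_abstractResponseUtility α γ u).1 ht)
      exact exists_mem_self_le_of_smythLE (fun _ _ hab => bestResponse_smythLE_of_le hsm hid hab
        (hB _).1) (fun a => (hB_extremal a).1) hz hzt
    · intro s hs
      obtain ⟨y, hy, hsy⟩ := bestResponse_hoareLE_of_le hsm hid (ρ.le_closure s) (hB _).1 s hs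
      obtain ⟨t, ht, hst⟩ := exists_mem_self_ge_of_hoareLE (F := fun a => bestResponse u (ρ a))
        (fun _ _ hab => bestResponse_hoareLE_of_le hsm hid (ρ.monotone hab) (hB _).1)
        (fun a => (hB_extremal (ρ a)).2) hy hsy
      exact ⟨t, (mem_nashEq_abstractResponseUtility α γ u).2 ht, hst⟩
  exact ⟨hEM, fun _ _ => hEM.1.le_of_isLeast, fun _ _ => hEM.2.le_of_isGreatest⟩

/-- correctness of games with abstract best response: let
`Γ = ⟨Sᵢ, uᵢ⟩` be a supermodular game whose best response `B` has nonempty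
subcomplete-sublattice values, `(αᵢ, Sᵢ, Aᵢ, γᵢ)` Galois connections, and
`Γ_G = ⟨Sᵢ, u_{i,G}⟩` with `u_{i,G}(sᵢ, s₋ᵢ) = uᵢ(sᵢ, ρ₋ᵢ(s₋ᵢ))`, whose best
response `B_G` also has nonempty subcomplete-sublattice values.  Then
`Eq(Γ) ⪯_EM Eq(Γ_G)`; in particular the least (resp. greatest) equilibrium of `Γ`
is below the least (resp. greatest) equilibrium of `Γ_G`. -/
theorem abstract_best_response_game_correctness {n : ℕ} {S A : Fin n → Type*}
    [∀ j, CompleteLattice (S j)] [∀ j, CompleteLattice (A j)]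
    (α : ∀ j, S j → A j) (γ : ∀ j, A j → S j)
    (hgc : ∀ j, GaloisConnection (α j) (γ j))
    {N : Fin n → ℕ} (u : ∀ i, (∀ j, S j) → (Fin (N i) → ℝ))
    -- Γ is supermodular: each uᵢ(·, s₋ᵢ) is supermodular …
    (hsm : ∀ i, ∀ s : ∀ j, S j, ∀ x y : S i,
      u i (Function.update s i x) + u i (Function.update s i y) ≤
        u i (Function.update s i (x ⊔ y)) + u i (Function.update s i (x ⊓ y)))
    -- … and each uᵢ has increasing differences in (sᵢ, s₋ᵢ)
    (hid : ∀ i, ∀ x x' : S i, x ≤ x' → ∀ s t : ∀ j, S j, s ≤ t →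
      u i (Function.update s i x') - u i (Function.update s i x) ≤
        u i (Function.update t i x') - u i (Function.update t i x))
    -- B(s) is a nonempty subcomplete sublattice of S
    (hB : ∀ s : ∀ j, S j, (bestResponse u s).Nonempty ∧
      ∀ Z ⊆ bestResponse u s, Z.Nonempty →
        sInf Z ∈ bestResponse u s ∧ sSup Z ∈ bestResponse u s)
    -- B_G(s) is a nonempty subcomplete sublattice of S
    (hBG : ∀ s : ∀ j, S j,
      (bestResponse (abstractResponseUtility α γ u) s).Nonempty ∧
      ∀ Z ⊆ bestResponse (abstractResponseUtility α γ u) s, Z.Nonempty →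
        sInf Z ∈ bestResponse (abstractResponseUtility α γ u) s ∧
        sSup Z ∈ bestResponse (abstractResponseUtility α γ u) s) :
    EgliMilnerLE (nashEq u) (nashEq (abstractResponseUtility α γ u)) ∧
    (∀ L L', IsLeast (nashEq u) L →
      IsLeast (nashEq (abstractResponseUtility α γ u)) L' → L ≤ L') ∧
    (∀ G G', IsGreatest (nashEq u) G →
      IsGreatest (nashEq (abstractResponseUtility α γ u)) G' → G ≤ G') :=
  abstract_best_response_game_correctness_general α γ hgc u hsm hid hB
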